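/- Let γ : Fin n → ℝ with 0 < γ_i < 1 for all i, let ŷ ∈ 𝔽₂ⁿ, let P be the associated likelihood weight, let I ⊆ Fin n be an index set, and let T = {ŷ ⊕ 1_K : K ⊆ I} be the set of Chase testwords. For j ∉ I set ρ_j = (1 − γ_j)/γ_j. Then the total likelihood of the union over all testwords of their restricted radius-2 Hamming balls with respect to the coordinates outside I satisfies P(⋃_{τ ∈ T} B_2(τ, I)) = (1 + Σ_{j ∉ I} ρ_j + Σ_{j < j', j ∉ I, j' ∉ I} ρ_j · ρ_{j'}) · ∏_{j ∉ I} γ_j. -/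

import Mathlib

open Finset

/-!
Every word is `ŷ ⊕ 1_F` for a unique flip pattern `F`. Such a word lies in the union of the
restricted balls iff `|F \ I| ≤ 2`: the testword `ŷ ⊕ 1_(F ∩ I)` agrees with it on `I` and is at
distance `|F \ I|` from it, while any testword agrees with `ŷ` off `I`. The likelihood of
`ŷ ⊕ 1_F` is `∏_{i ∈ F} (1 - γ_i) ∏_{i ∉ F} γ_i`, so the unconstrained coordinates in `I`
contribute `∏_{i ∈ I} ((1 - γ_i) + γ_i) = 1`, and the sum over the patterns `D ⊆ Iᶜ` with
`|D| ≤ 2` is `∏_{j ∉ I} γ_j` times the elementary symmetric sums of degree `0, 1, 2` of the `ρ_j`.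
-/

/-- The restricted Hamming ball `B_r(v, K)`: vectors within Hamming distance
`r` of `v` that agree with `v` on all positions in `K`. -/
def rBall {n : ℕ} (r : ℕ) (v : Fin n → ZMod 2) (K : Finset (Fin n)) :
    Finset (Fin n → ZMod 2) :=
  Finset.univ.filter (fun w => hammingDist v w ≤ r ∧ ∀ i ∈ K, w i = v i)

/-- The likelihood weight of a vector `v`, given parameters `γ` and
hard-decision vector `yh`. -/
def lik {n : ℕ} (γ : Fin n → ℝ) (yh : Fin n → ZMod 2) (v : Fin n → ZMod 2) : ℝ :=
  ∏ i, if v i = yh i then γ i else 1 - γ i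

/-- The indicator vector `1_K ∈ 𝔽₂ⁿ` of a set of positions `K`. -/
def indicatorVec {n : ℕ} (K : Finset (Fin n)) : Fin n → ZMod 2 :=
  fun i => if i ∈ K then 1 else 0

/-- The Chase testword obtained from the hard decision `yh` by flipping the
positions in `K`, i.e. `ŷ ⊕ 1_K`. -/
def chaseTestword {n : ℕ} (yh : Fin n → ZMod 2) (K : Finset (Fin n)) :
    Fin n → ZMod 2 :=
  fun i => yh i + indicatorVec K i

section FlipPatterns

variable {ι R : Type*} [DecidableEq ι]

theorem prod_ite_mem_of_subset [CommMonoid R] {s D : Finset ι} (hD : D ⊆ s) (a b : ι → R) :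
    ∏ i ∈ s, (if i ∈ D then a i else b i) = (∏ i ∈ D, a i) * ∏ i ∈ s \ D, b i := by
  rw [prod_ite, filter_mem_eq_inter, inter_eq_right.mpr hD, filter_notMem_eq_sdiff]

theorem sum_powerset_prod_ite_mem [CommSemiring R] (s : Finset ι) (a b : ι → R) :
    ∑ D ∈ s.powerset, ∏ i ∈ s, (if i ∈ D then a i else b i) = ∏ i ∈ s, (a i + b i) := by
  rw [prod_add]
  exact sum_congr rfl fun D hD => prod_ite_mem_of_subset (mem_powerset.mp hD) a b

theorem prod_ite_mem_eq_prod_div_mul [Field R] {s D : Finset ι} (hD : D ⊆ s) (a b : ι → R)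
    (hb : ∀ i ∈ D, b i ≠ 0) :
    ∏ i ∈ s, (if i ∈ D then a i else b i) = (∏ i ∈ D, a i / b i) * ∏ i ∈ s, b i := by
  rw [prod_ite_mem_of_subset hD, ← prod_sdiff hD, prod_div_distrib]
  field_simp [prod_ne_zero_iff.mpr hb]

theorem sum_inter_mul_sdiff [Fintype ι] [CommSemiring R] (I : Finset ι) (g h : Finset ι → R) :
    ∑ F, g (F ∩ I) * h (F \ I) = (∑ K ∈ I.powerset, g K) * ∑ D ∈ Iᶜ.powerset, h D := by
  rw [sum_mul_sum, ← sum_product']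
  refine sum_nbij' (fun F => (F ∩ I, F \ I)) (fun p => p.1 ∪ p.2) ?_ ?_ ?_ ?_ ?_
  · intro F _
    simp only [mem_product, mem_powerset]
    exact ⟨inter_subset_right, fun i hi => mem_compl.mpr (mem_sdiff.mp hi).2⟩
  · exact fun _ _ => mem_coe.mpr (mem_univ _)
  · exact fun F _ => (union_comm _ _).trans (sdiff_union_inter F I)
  · rintro ⟨K, D⟩ hp
    simp only [mem_product, mem_powerset] at hp
    ext i <;> grind [mem_compl]
  · exact fun _ _ => rfl

theorem sum_filter_sdiff_prod_ite_mem [Fintype ι] [CommSemiring R] (I : Finset ι)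
    (p : Finset ι → Prop) [DecidablePred p] (a b : ι → R) :
    ∑ F with p (F \ I), ∏ i, (if i ∈ F then a i else b i)
      = (∏ i ∈ I, (a i + b i)) *
          ∑ D ∈ Iᶜ.powerset with p D, ∏ i ∈ Iᶜ, (if i ∈ D then a i else b i) := by
  rw [sum_filter, sum_filter, ← sum_powerset_prod_ite_mem, ← sum_inter_mul_sdiff]
  refine sum_congr rfl fun F _ => ?_
  rw [mul_ite, mul_zero, ← prod_mul_prod_compl I]
  congr 2 <;> refine prod_congr rfl fun i hi => ?_ <;> simp_all

end FlipPatterns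

section PairSums

variable {ι R : Type*} [LinearOrder ι]

theorem sum_powersetCard_two {M : Type*} [AddCommMonoid M] (s : Finset ι) (f : Finset ι → M) :
    ∑ D ∈ s.powersetCard 2, f D = ∑ j ∈ s, ∑ j' ∈ s with j < j', f {j, j'} := by
  rw [sum_sigma']
  symm
  refine sum_nbij (fun p => {p.1, p.2}) ?_ ?_ ?_ (fun _ _ => rfl)
  · rintro ⟨a, b⟩ hab
    simp only [mem_sigma, mem_filter] at hab
    exact mem_powersetCard.mpr ⟨by grind [insert_subset_iff], card_pair hab.2.2.ne⟩
  · rintro ⟨a, b⟩ hab ⟨c, d⟩ hcd heq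
    simp only [mem_coe, mem_sigma, mem_filter] at hab hcd heq
    have mem : ∀ x, x = a ∨ x = b ↔ x = c ∨ x = d := by simpa using Finset.ext_iff.mp heq
    obtain ⟨rfl, rfl⟩ : a = c ∧ b = d := by
      have := mem a; have := mem b; have := mem c; have := mem d; grind
    rfl
  · intro D hD
    obtain ⟨hDs, hD2⟩ := mem_powersetCard.mp hD
    obtain ⟨a, b, hne, rfl⟩ := card_eq_two.mp hD2
    rcases hne.lt_or_gt with hlt | hgt
    · exact ⟨⟨a, b⟩, by simp_all [insert_subset_iff], rfl⟩
    · exact ⟨⟨b, a⟩, by simp_all [insert_subset_iff], pair_comm b a⟩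

theorem sum_powerset_filter_card_le_two_prod [CommSemiring R] (s : Finset ι) (ρ : ι → R) :
    ∑ D ∈ s.powerset with #D ≤ 2, ∏ j ∈ D, ρ j
      = 1 + ∑ j ∈ s, ρ j + ∑ j ∈ s, ∑ j' ∈ s with j < j', ρ j * ρ j' := by
  rw [← sum_fiberwise_of_maps_to (g := card) (t := range 3) (by simp [Nat.lt_succ_iff])]
  simp only [filter_filter, sum_range_succ, sum_range_zero, zero_add]
  have fiber : ∀ k ≤ 2, {D ∈ s.powerset | #D ≤ 2 ∧ #D = k} = s.powersetCard k := fun k hk => by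
    ext D; simp only [mem_filter, mem_powerset, mem_powersetCard]; grind
  rw [fiber 0 (by norm_num), fiber 1 (by norm_num), fiber 2 le_rfl, powersetCard_zero,
    powersetCard_one, sum_powersetCard_two]
  simp only [sum_map, Function.Embedding.coeFn_mk, prod_singleton, sum_singleton, prod_empty]
  congr 1
  refine sum_congr rfl fun j _ => sum_congr rfl fun j' hj' => prod_pair (mem_filter.mp hj').2.ne

end PairSums

section ChaseTestwords

variable {n : ℕ}

theorem chaseTestword_apply_eq_iff (yh w : Fin n → ZMod 2) (K : Finset (Fin n)) (i : Fin n) :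
    chaseTestword yh K i = w i ↔ (i ∈ K ↔ w i ≠ yh i) := by
  have zmod_two : ∀ a b : ZMod 2, (b + 1 = a ↔ a ≠ b) ∧ (b + 0 = a ↔ ¬a ≠ b) := by decide
  by_cases h : i ∈ K <;>
    simp only [chaseTestword, indicatorVec, h, if_true, if_false, true_iff, false_iff, zmod_two]

def chaseTestwordEquiv (yh : Fin n → ZMod 2) : Finset (Fin n) ≃ (Fin n → ZMod 2) where
  toFun := chaseTestword yh
  invFun w := {i | w i ≠ yh i}
  left_inv F := by ext i; simp [chaseTestword_apply_eq_iff]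
  right_inv w := funext fun i => (chaseTestword_apply_eq_iff yh w _ i).mpr (by simp)

theorem lik_chaseTestword (γ : Fin n → ℝ) (yh : Fin n → ZMod 2) (F : Finset (Fin n)) :
    lik γ yh (chaseTestword yh F) = ∏ i, if i ∈ F then 1 - γ i else γ i :=
  prod_congr rfl fun i _ => by simp [chaseTestword_apply_eq_iff, ite_not]

theorem biUnion_rBall_chaseTestword (yh : Fin n → ZMod 2) (I : Finset (Fin n)) (r : ℕ) :
    (I.powerset.image (chaseTestword yh)).biUnion (fun τ => rBall r τ I)
      = ({F | #(F \ I) ≤ r} : Finset _).map (chaseTestwordEquiv yh).toEmbedding := by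
  ext w
  rw [mem_map_equiv]
  simp only [mem_biUnion, mem_image, mem_powerset, rBall, hammingDist, mem_filter, mem_univ,
    true_and]
  change _ ↔ #(({i | w i ≠ yh i} : Finset _) \ I) ≤ r
  constructor
  · rintro ⟨_, ⟨K, hKI, rfl⟩, hdist, -⟩
    refine (card_le_card fun i hi => ?_).trans hdist
    simp only [mem_sdiff, mem_filter, mem_univ, true_and] at hi ⊢
    rw [Ne, chaseTestword_apply_eq_iff]
    exact fun h => hi.2 (hKI (h.mpr hi.1))
  · intro hflips
    refine ⟨_, ⟨{i ∈ I | w i ≠ yh i}, filter_subset _ _, rfl⟩, ?_, fun i hi => ?_⟩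
    · refine (card_le_card fun i hi => ?_).trans hflips
      simp only [mem_sdiff, mem_filter, mem_univ, true_and] at hi ⊢
      rw [Ne, chaseTestword_apply_eq_iff] at hi
      grind
    · exact ((chaseTestword_apply_eq_iff yh w _ i).mpr (by simp [hi])).symm

end ChaseTestwords

/-- The likelihood of the union over all Chase testwords of their restricted
radius-2 Hamming balls with respect to the coordinates outside `I`, where
`ρ_j = (1−γ_j)/γ_j` for `j ∉ I`:
`P(⋃_{τ ∈ T} B_2(τ, I)) = (1 + Σ_{j ∉ I} ρ_j + Σ_{j<j', j,j' ∉ I} ρ_j·ρ_{j'})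
                            · ∏_{j ∉ I} γ_j`. -/
theorem likelihood_union_chase_balls_two
    (n : ℕ) (γ : Fin n → ℝ) (hγ : ∀ i, 0 < γ i ∧ γ i < 1)
    (yh : Fin n → ZMod 2) (I : Finset (Fin n)) :
    ∑ w ∈ (I.powerset.image (chaseTestword yh)).biUnion (fun τ => rBall 2 τ I),
        lik γ yh w =
      (1 + ∑ j ∈ Iᶜ, (1 - γ j) / γ j
         + ∑ j ∈ Iᶜ, ∑ j' ∈ Iᶜ.filter (fun j' => j < j'),
             ((1 - γ j) / γ j) * ((1 - γ j') / γ j')) * ∏ j ∈ Iᶜ, γ j := by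
  rw [biUnion_rBall_chaseTestword, sum_map]
  calc ∑ F with #(F \ I) ≤ 2, lik γ yh (chaseTestword yh F)
      = ∑ F with #(F \ I) ≤ 2, ∏ i, if i ∈ F then 1 - γ i else γ i :=
        sum_congr rfl fun F _ => lik_chaseTestword γ yh F
    _ = ∑ D ∈ Iᶜ.powerset with #D ≤ 2, ∏ i ∈ Iᶜ, if i ∈ D then 1 - γ i else γ i := by
        rw [sum_filter_sdiff_prod_ite_mem I (fun D => #D ≤ 2)]
        simp only [sub_add_cancel, prod_const_one, one_mul]
    _ = ∑ D ∈ Iᶜ.powerset with #D ≤ 2, (∏ j ∈ D, (1 - γ j) / γ j) * ∏ j ∈ Iᶜ, γ j :=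
        sum_congr rfl fun D hD => prod_ite_mem_eq_prod_div_mul
          (mem_powerset.mp (mem_filter.mp hD).1) _ _ fun i _ => (hγ i).1.ne'
    _ = _ := by rw [← sum_mul, sum_powerset_filter_card_le_two_prod]
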